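/- arXiv:1704.05621 — 2 statements merged into one kernel-verified Lean document; each statement's English description precedes it below -/
import Mathlib

section
/- Let P be a naturally labeled partial order on {1,2,…,m} and let b_1 ≤ ⋯ ≤ b_m be the increasing rearrangement of mc(1),…,mc(m). Then for every π ∈ L(P) and every integer 0 ≤ k ≤ m, maj(π) − k·des(π) + k(k+1)/2 ≥ b_1 + b_2 + ⋯ + b_k. -/
open Finset Polynomial LaurentPolynomial

attribute [local instance] Classical.propDecidable

/-- The value `π_i` of the word of `π` at the 1-based position `i` (values in `{1, …, m}`). -/
def wordAt (m : ℕ) (π : Equiv.Perm (Fin m)) (i : ℕ) : ℕ :=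
  if h : i - 1 < m then ((π ⟨i - 1, h⟩ : Fin m) : ℕ) + 1 else 0

/-- The descent set `Des(π) ⊆ {1, …, m-1}` (1-based positions). -/
def DesSet (m : ℕ) (π : Equiv.Perm (Fin m)) : Finset ℕ :=
  (Finset.Ico 1 m).filter fun i => wordAt m π (i + 1) < wordAt m π i

/-- The number of descents `des(π)`. -/
def desNum (m : ℕ) (π : Equiv.Perm (Fin m)) : ℕ := (DesSet m π).card

/-- The major index `maj(π)`. -/
def majIdx (m : ℕ) (π : Equiv.Perm (Fin m)) : ℕ := ∑ i ∈ DesSet m π, i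

/-- The partial order `P` on `{1,…,m}` (encoded as `Fin m`) is naturally labeled:
`x ≤_P y` implies `x ≤ y` as integers. -/
def NatLabeled (m : ℕ) (P : PartialOrder (Fin m)) : Prop :=
  ∀ x y : Fin m, P.le x y → x ≤ y

/-- `π` is a linear extension of `P`: `π_i ≤_P π_j` implies `i ≤ j`. -/
def IsLinExt (m : ℕ) (P : PartialOrder (Fin m)) (π : Equiv.Perm (Fin m)) : Prop :=
  ∀ i j : Fin m, P.le (π i) (π j) → i ≤ j

/-- `mc(x)`: the maximum number of elements of a chain of `P` whose largest element is `x`. -/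
noncomputable def mc (m : ℕ) (P : PartialOrder (Fin m)) (x : Fin m) : ℕ :=
  sSup {k : ℕ | ∃ s : Finset (Fin m),
    s.card = k ∧ IsChain P.le ↑s ∧ x ∈ s ∧ ∀ y ∈ s, P.le y x}

/-- `m̄c(x)`: the maximum number of elements of a chain of `P` whose smallest element is `x`. -/
noncomputable def mcUp (m : ℕ) (P : PartialOrder (Fin m)) (x : Fin m) : ℕ :=
  sSup {k : ℕ | ∃ s : Finset (Fin m),
    s.card = k ∧ IsChain P.le ↑s ∧ x ∈ s ∧ ∀ y ∈ s, P.le x y}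

/-- The `q`-integer `[n]_q` for `n ∈ ℤ`, as a Laurent polynomial:
`[n]_q = 1 + q + ⋯ + q^{n-1}` for `n ≥ 0` and `[-n]_q = -q^{-n} [n]_q`. -/
noncomputable def qInt (n : ℤ) : LaurentPolynomial ℤ :=
  if 0 ≤ n then ∑ i ∈ Finset.range n.toNat, T (i : ℤ)
  else -(T n * ∑ i ∈ Finset.range (-n).toNat, T (i : ℤ))

/-- The polynomial `F_P(q,x) = Σ_{π ∈ L(P)} q^{maj π} Π_{i=1}^m ([i - des π]_q + q^{i - des π} x)`,
an element of `(ℤ[q,q⁻¹])[x]` (it in fact lies in `ℤ[q,x]`). -/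
noncomputable def Fpoly (m : ℕ) (P : PartialOrder (Fin m)) : Polynomial (LaurentPolynomial ℤ) :=
  ∑ π ∈ Finset.univ.filter (fun π => IsLinExt m P π),
    Polynomial.C (T (majIdx m π : ℤ)) *
      ∏ i ∈ Finset.Icc 1 m,
        (Polynomial.C (qInt ((i : ℤ) - desNum m π)) +
          Polynomial.C (T ((i : ℤ) - desNum m π)) * Polynomial.X)

/-- The Newton polygon of an element of `(ℤ[q,q⁻¹])[x]`, in the `(q,x)`-plane. -/
noncomputable def NTL (f : Polynomial (LaurentPolynomial ℤ)) : Set (ℝ × ℝ) :=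
  convexHull ℝ {p : ℝ × ℝ | ∃ (i : ℤ) (k : ℕ), AddMonoidAlgebra.coeff (f.coeff k) i ≠ 0 ∧ p = ((i : ℝ), (k : ℝ))}

/-- The Newton polygon of an element of `ℤ[q][x]`, in the `(q,x)`-plane. -/
noncomputable def NTP (f : Polynomial (Polynomial ℤ)) : Set (ℝ × ℝ) :=
  convexHull ℝ {p : ℝ × ℝ | ∃ (i k : ℕ), (f.coeff k).coeff i ≠ 0 ∧ p = ((i : ℝ), (k : ℝ))}

/-- The polygon `C(a_1,…,a_m;h)`: the convex hull of `(0,0)`, `(a_1+⋯+a_i, i)` for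
`1 ≤ i ≤ m`, `(h,m)` and `(h-m,0)`. -/
noncomputable def Cpolygon (m : ℕ) (a : ℕ → ℕ) (h : ℕ) : Set (ℝ × ℝ) :=
  convexHull ℝ ({((0 : ℝ), (0 : ℝ)), ((h : ℝ), (m : ℝ)), ((h : ℝ) - (m : ℝ), (0 : ℝ))} ∪
    {p : ℝ × ℝ | ∃ i ∈ Finset.Icc 1 m, p = ((∑ j ∈ Finset.Icc 1 i, (a j : ℝ)), (i : ℝ))})

/-- The index of the descent block of `π` containing the 1-based position `j`. -/
def blockIdx (m : ℕ) (π : Equiv.Perm (Fin m)) (j : ℕ) : ℕ :=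
  1 + ((Finset.Ico 1 j).filter (fun i => i ∉ DesSet m π)).card

/-- `DB_i(π)`: the set of entries of the `i`-th descent block of `π`. -/
def DB (m : ℕ) (π : Equiv.Perm (Fin m)) (i : ℕ) : Finset (Fin m) :=
  Finset.univ.filter fun x => blockIdx m π (((π.symm x : Fin m) : ℕ) + 1) = i

/-- `PP(P,n)`: the set of `P`-partitions (order-reversing maps) with all parts at most `n`,
encoded as functions `Fin m → Fin (n+1)`. -/
noncomputable def PPset (m : ℕ) (P : PartialOrder (Fin m)) (n : ℕ) :
    Finset (Fin m → Fin (n + 1)) :=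
  Finset.univ.filter fun σ => ∀ x y : Fin m, P.le x y → σ y ≤ σ x

/-- `|σ| = σ(1) + ⋯ + σ(m)`. -/
def sizePP (m n : ℕ) (σ : Fin m → Fin (n + 1)) : ℕ := ∑ i : Fin m, (σ i : ℕ)

/-- The `q`-integer `[n]_q` for `n ∈ ℕ`, as an ordinary polynomial in `q`. -/
noncomputable def qIntP (n : ℕ) : Polynomial ℤ := ∑ i ∈ Finset.range n, Polynomial.X ^ i

/-- The `q`-factorial `[n]_q!`. -/
noncomputable def qFact (n : ℕ) : Polynomial ℤ := ∏ i ∈ Finset.Icc 1 n, qIntP i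

/-- The dual poset `P̄` : `x ≤_{P̄} y` iff `y ≤_P x`. -/
def dualP (m : ℕ) (P : PartialOrder (Fin m)) : PartialOrder (Fin m) where
  le x y := P.le y x
  lt x y := P.lt y x
  le_refl x := P.le_refl x
  le_trans a b c h1 h2 := P.le_trans c b a h2 h1
  le_antisymm a b h1 h2 := P.le_antisymm a b h2 h1
  lt_iff_le_not_ge a b := P.lt_iff_le_not_ge b a

/-- The canonical ring map `ℤ[q] → ℚ(q)`. -/
noncomputable def toRF : Polynomial ℤ →+* RatFunc ℚ :=
  (algebraMap (Polynomial ℚ) (RatFunc ℚ)).comp (Polynomial.mapRingHom (Int.castRingHom ℚ))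

/-- `W(n·O(P), q) = Σ_σ q^{|σ|}`, the sum being over all order-preserving maps
`σ : P → {0,…,n}`. -/
noncomputable def Wpoly (m : ℕ) (P : PartialOrder (Fin m)) (n : ℕ) : Polynomial ℤ :=
  ∑ σ ∈ (Finset.univ.filter fun σ : Fin m → Fin (n + 1) =>
      ∀ x y : Fin m, P.le x y → σ x ≤ σ y),
    Polynomial.X ^ (∑ i : Fin m, (σ i : ℕ))

/-- The polynomial `q^{mj - s(s-1)/2} Π_{i=1}^{s-1} (x - [i]_q) Π_{i=1}^{m-s} (q^i x + [i]_q)`. -/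
noncomputable def tSummand (m s mj : ℕ) : Polynomial (LaurentPolynomial ℤ) :=
  Polynomial.C (T ((mj : ℤ) - (s * (s - 1) / 2 : ℕ))) *
    (∏ i ∈ Finset.Icc 1 (s - 1), (Polynomial.X - Polynomial.C (qInt (i : ℤ)))) *
    ∏ i ∈ Finset.Icc 1 (m - s),
      (Polynomial.C (T (i : ℤ)) * Polynomial.X + Polynomial.C (qInt (i : ℤ)))

/-- `t(π,k)`: the coefficient of `x^{k-1}` in
`q^{maj π - s(s-1)/2} Π_{i=1}^{s-1} (x - [i]_q) Π_{i=1}^{m-s} (q^i x + [i]_q)`,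
where `s = des π`. -/
noncomputable def tpoly (m : ℕ) (π : Equiv.Perm (Fin m)) (k : ℕ) : LaurentPolynomial ℤ :=
  (tSummand m (desNum m π) (majIdx m π)).coeff (k - 1)

/-- The polynomial `A(q,x) = Π_{i=1}^m (q^i x + [i]_q)`. -/
noncomputable def Apoly (m : ℕ) : Polynomial (LaurentPolynomial ℤ) :=
  ∏ i ∈ Finset.Icc 1 m,
    (Polynomial.C (T (i : ℤ)) * Polynomial.X + Polynomial.C (qInt (i : ℤ)))

/-- The polynomial `B(q,x) = x Σ_{π ∈ L(P), des π ≥ 1} q^{maj π - s(s-1)/2}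
Π_{i=1}^{s-1} (x - [i]_q) Π_{i=1}^{m-s} (q^i x + [i]_q)`, where `s = des π`;
one has `F_P(q,x) = A(q,x) + B(q,x)`. -/
noncomputable def Bpoly (m : ℕ) (P : PartialOrder (Fin m)) : Polynomial (LaurentPolynomial ℤ) :=
  Polynomial.X *
    ∑ π ∈ Finset.univ.filter (fun π => IsLinExt m P π ∧ 1 ≤ desNum m π),
      tSummand m (desNum m π) (majIdx m π)

/-!
Let `blockIdx π j` be the index of the descent block of `π` containing position `j`. If `y <_P z`,
then `y < z` as integers (natural labeling) and `y` precedes `z` in `π`, so the word of `π` cannot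
descend all the way from `y` to `z`: an ascent separates them and `y` lies in an earlier block.
Along a chain ending at `x` the block indices therefore strictly increase, whence
`mc(x) ≤ blockIdx π (pos x)`. The first `i` letters of `π` all have `mc ≤ blockIdx π i`, so the
sorted sequence satisfies `b_i ≤ blockIdx π i = i - #{d ∈ Des π | d < i}`. Summing over `i ≤ k`,
each descent `d` is counted at least `k - d` times, which gives `maj π - k des π + k(k+1)/2`.
-/

section DescentBlocks

variable {m : ℕ} {π : Equiv.Perm (Fin m)}

lemma blockIdx_mono : Monotone (blockIdx m π) := fun _ _ hpq =>
  Nat.add_le_add_left (card_le_card (filter_subset_filter _ (Ico_subset_Ico_right hpq))) 1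

lemma wordAt_symm_succ (x : Fin m) : wordAt m π ((π.symm x : ℕ) + 1) = (x : ℕ) + 1 := by
  simp [wordAt]

lemma exists_notMem_desSet_of_wordAt_le {p q : ℕ} (hpq : p < q)
    (h : wordAt m π p ≤ wordAt m π q) : ∃ a ∈ Ico p q, a ∉ DesSet m π := by
  induction q, hpq using Nat.le_induction with
  | base => exact ⟨p, by simp, fun hp => (mem_filter.1 hp).2.not_ge h⟩
  | succ q hpq ih =>
    by_cases hq : q ∈ DesSet m π
    · obtain ⟨a, ha, had⟩ := ih (h.trans (mem_filter.1 hq).2.le)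
      exact ⟨a, Ico_subset_Ico_right q.le_succ ha, had⟩
    · exact ⟨q, mem_Ico.2 ⟨by omega, q.lt_succ_self⟩, hq⟩

lemma blockIdx_lt_blockIdx_of_wordAt_le {p q : ℕ} (hp : 1 ≤ p) (hpq : p < q)
    (h : wordAt m π p ≤ wordAt m π q) : blockIdx m π p < blockIdx m π q := by
  obtain ⟨a, ha, had⟩ := exists_notMem_desSet_of_wordAt_le hpq h
  have hsub : (Ico 1 p).filter (· ∉ DesSet m π) ⊆ (Ico 1 q).filter (· ∉ DesSet m π) :=
    filter_subset_filter _ (Ico_subset_Ico_right hpq.le)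
  refine Nat.add_lt_add_left (card_lt_card ((ssubset_iff_of_subset hsub).2 ⟨a, ?_, ?_⟩)) 1
  · simp only [mem_filter, mem_Ico] at ha ⊢
    exact ⟨⟨by omega, ha.2⟩, had⟩
  · simp only [mem_filter, mem_Ico] at ha ⊢
    omega

end DescentBlocks

lemma le_of_le_card_filter_le {α β : Type*} [Fintype α] [LinearOrder β] {f : α → β}
    {b : ℕ → β} {n i : ℕ} {v : β} (hmono : MonotoneOn b (Icc 1 n))
    (hperm : (Icc 1 n).val.map b = (univ : Finset α).val.map f) (hi : i ∈ Icc 1 n)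
    (hcard : i ≤ #{x | f x ≤ v}) : b i ≤ v := by
  by_contra! hv
  have hcount : #{j ∈ Icc 1 n | b j ≤ v} = #{x | f x ≤ v} := by
    have h := congrArg (Multiset.countP (· ≤ v)) hperm
    rwa [Multiset.countP_map, Multiset.countP_map] at h
  have hsub : {j ∈ Icc 1 n | b j ≤ v} ⊆ Ico 1 i := by
    intro j hj
    simp only [mem_filter, mem_Icc] at hj
    refine mem_Ico.2 ⟨hj.1.1, lt_of_not_ge fun hij => ?_⟩
    exact (hv.trans_le (hmono hi (mem_Icc.2 hj.1) hij)).not_ge hj.2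
  have hsmall := (card_le_card hsub).trans_eq (Nat.card_Ico 1 i)
  have hi1 := (mem_Icc.1 hi).1
  omega

section LinearExtensions

variable {m : ℕ} {P : PartialOrder (Fin m)} {π : Equiv.Perm (Fin m)}

lemma blockIdx_lt_blockIdx_of_le_of_ne (hnat : NatLabeled m P) (hπ : IsLinExt m P π)
    {y z : Fin m} (hle : P.le y z) (hne : y ≠ z) :
    blockIdx m π ((π.symm y : ℕ) + 1) < blockIdx m π ((π.symm z : ℕ) + 1) := by
  have hpos : (π.symm y : ℕ) ≤ π.symm z := hπ _ _ (by simpa using hle)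
  have hpos' : (π.symm y : ℕ) ≠ π.symm z := Fin.val_ne_of_ne (π.symm.injective.ne hne)
  refine blockIdx_lt_blockIdx_of_wordAt_le le_add_self
    (Nat.add_lt_add_right (lt_of_le_of_ne hpos hpos') 1) ?_
  rw [wordAt_symm_succ, wordAt_symm_succ]
  exact Nat.add_le_add_right (hnat y z hle) 1

lemma mc_le_blockIdx (hnat : NatLabeled m P) (hπ : IsLinExt m P π) (x : Fin m) :
    mc m P x ≤ blockIdx m π ((π.symm x : ℕ) + 1) := by
  refine csSup_le' ?_
  rintro _ ⟨s, rfl, hchain, hxs, hub⟩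
  set f : Fin m → ℕ := fun y => blockIdx m π ((π.symm y : ℕ) + 1)
  have hmaps : ∀ y ∈ s, f y ∈ Icc 1 (f x) := by
    intro y hy
    refine mem_Icc.2 ⟨Nat.le_add_right _ _, ?_⟩
    rcases eq_or_ne y x with rfl | hne
    · exact le_rfl
    · exact (blockIdx_lt_blockIdx_of_le_of_ne hnat hπ (hub y hy) hne).le
  have hinj : Set.InjOn f s := by
    intro y hy z hz hf
    by_contra hne
    rcases hchain hy hz hne with h | h
    · exact (blockIdx_lt_blockIdx_of_le_of_ne hnat hπ h hne).ne hf
    · exact (blockIdx_lt_blockIdx_of_le_of_ne hnat hπ h (Ne.symm hne)).ne hf.symm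
  simpa using card_le_card_of_injOn f hmaps hinj

lemma le_blockIdx_of_sorted_mc (hnat : NatLabeled m P) (hπ : IsLinExt m P π) {b : ℕ → ℕ}
    (hbmono : MonotoneOn b (Icc 1 m))
    (hbperm : (Icc 1 m).val.map b = (univ : Finset (Fin m)).val.map (mc m P))
    {i : ℕ} (hi : i ∈ Icc 1 m) : b i ≤ blockIdx m π i := by
  refine le_of_le_card_filter_le hbmono hbperm hi <| le_trans (le_of_eq ?_)
    (card_le_card_of_injOn (s := {p : Fin m | (p : ℕ) < i}) π (fun p hp => ?_) π.injective.injOn)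
  · rw [Fin.card_filter_val_lt, min_eq_right (mem_Icc.1 hi).2]
  · simp only [coe_filter, mem_univ, true_and, Set.mem_ofPred_eq] at hp ⊢
    calc mc m P (π p) ≤ blockIdx m π (p + 1) := by simpa using mc_le_blockIdx hnat hπ (π p)
      _ ≤ blockIdx m π i := blockIdx_mono hp

end LinearExtensions

section Sums

variable {m : ℕ} (π : Equiv.Perm (Fin m))

lemma blockIdx_eq_sub_card {i : ℕ} (hi : 1 ≤ i) :
    (blockIdx m π i : ℤ) = i - #{d ∈ DesSet m π | d < i} := by
  have hdes : {d ∈ DesSet m π | d < i} = (Ico 1 i).filter (· ∈ DesSet m π) := by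
    ext d
    simp only [mem_filter, mem_Ico]
    constructor
    · rintro ⟨hd, hdi⟩
      exact ⟨⟨(mem_Ico.1 (mem_filter.1 hd).1).1, hdi⟩, hd⟩
    · rintro ⟨⟨_, hdi⟩, hd⟩
      exact ⟨hd, hdi⟩
  have hsplit := card_filter_add_card_filter_not (s := Ico 1 i) (· ∈ DesSet m π)
  rw [Nat.card_Ico] at hsplit
  rw [blockIdx, hdes]
  omega

lemma sub_le_sum_card_filter_desSet_lt (k : ℕ) :
    (k * desNum m π - majIdx m π : ℤ) ≤ ∑ i ∈ Icc 1 k, (#{d ∈ DesSet m π | d < i} : ℤ) := by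
  have hswap := sum_card_bipartiteAbove_eq_sum_card_bipartiteBelow
    (s := Icc 1 k) (t := DesSet m π) (fun i d => d < i)
  calc (k * desNum m π - majIdx m π : ℤ) = ∑ d ∈ DesSet m π, ((k : ℤ) - d) := by
        simp [sum_sub_distrib, desNum, majIdx, mul_comm]
    _ ≤ ∑ d ∈ DesSet m π, (#{i ∈ Icc 1 k | d < i} : ℤ) := by
        refine sum_le_sum fun d _ => ?_
        have hIoc : Ioc d k ⊆ {i ∈ Icc 1 k | d < i} := fun i hi => by
          simp only [mem_Ioc, mem_filter, mem_Icc] at hi ⊢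
          omega
        have := card_le_card hIoc
        rw [Nat.card_Ioc] at this
        omega
    _ = ∑ i ∈ Icc 1 k, (#{d ∈ DesSet m π | d < i} : ℤ) := by exact_mod_cast hswap.symm

lemma sum_Icc_one_id (k : ℕ) : ∑ i ∈ Icc 1 k, (i : ℤ) = k * (k + 1) / 2 := by
  have h := sum_range_id_mul_two (k + 1)
  rw [Nat.range_succ_eq_Icc_zero, ← add_sum_Ioc_eq_sum_Icc k.zero_le, zero_add,
    ← Icc_add_one_left_eq_Ioc, zero_add, Nat.add_sub_cancel, mul_comm (k + 1)] at h
  rw [← Nat.cast_sum, ← Int.mul_ediv_cancel (↑(∑ i ∈ Icc 1 k, i) : ℤ) two_ne_zero]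
  exact_mod_cast congrArg (· / 2) h

lemma sum_blockIdx_le (k : ℕ) :
    ∑ i ∈ Icc 1 k, (blockIdx m π i : ℤ) ≤
      (majIdx m π : ℤ) - k * desNum m π + k * (k + 1) / 2 := by
  rw [sum_congr rfl fun i hi => blockIdx_eq_sub_card π (mem_Icc.1 hi).1, sum_sub_distrib,
    sum_Icc_one_id]
  linarith [sub_le_sum_card_filter_desSet_lt π k]

end Sums

theorem statement8_general (m : ℕ) (P : PartialOrder (Fin m))
    (hnat : NatLabeled m P)
    (b : ℕ → ℕ)
    (hbmono : ∀ i ∈ Finset.Icc 1 m, ∀ j ∈ Finset.Icc 1 m, i ≤ j → b i ≤ b j)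
    (hbperm : (Finset.Icc 1 m).val.map b =
      (Finset.univ : Finset (Fin m)).val.map (mc m P))
    (π : Equiv.Perm (Fin m)) (hπ : IsLinExt m P π)
    (k : ℕ) (hk : k ≤ m) :
    (∑ i ∈ Finset.Icc 1 k, (b i : ℤ)) ≤
      (majIdx m π : ℤ) - k * desNum m π + k * (k + 1) / 2 := by
  have hbi : ∀ i ∈ Icc 1 k, b i ≤ blockIdx m π i := fun i hi =>
    le_blockIdx_of_sorted_mc hnat hπ (fun i hi j hj hij => hbmono i hi j hj hij) hbperm
      (Icc_subset_Icc_right hk hi)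
  calc ∑ i ∈ Icc 1 k, (b i : ℤ) ≤ ∑ i ∈ Icc 1 k, (blockIdx m π i : ℤ) :=
        sum_le_sum fun i hi => by exact_mod_cast hbi i hi
    _ ≤ _ := sum_blockIdx_le π k

theorem statement8 (m : ℕ) (hm : 1 ≤ m) (P : PartialOrder (Fin m))
    (hnat : NatLabeled m P)
    (b : ℕ → ℕ)
    (hbmono : ∀ i ∈ Finset.Icc 1 m, ∀ j ∈ Finset.Icc 1 m, i ≤ j → b i ≤ b j)
    (hbperm : (Finset.Icc 1 m).val.map b =
      (Finset.univ : Finset (Fin m)).val.map (mc m P))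
    (π : Equiv.Perm (Fin m)) (hπ : IsLinExt m P π)
    (k : ℕ) (hk : k ≤ m) :
    (∑ i ∈ Finset.Icc 1 k, (b i : ℤ)) ≤
      (majIdx m π : ℤ) - k * desNum m π + k * (k + 1) / 2 :=
  statement8_general m P hnat b hbmono hbperm π hπ k hk
end

section
/- Let P be a naturally labeled partial order on {1,2,…,m} that is not a chain (i.e., ≤_P is not a total order). Then for every integer 1 ≤ k ≤ m, the coefficient of x^k in B(q,x) is a nonzero polynomial in q and q_min([x^k]B(q,x)) = min{ maj(π) − k·des(π) + k(k+1)/2 : π ∈ L(P), 1 ≤ des(π) ≤ k }. -/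
/-!
Write `B = x · Σ_π t_π` with `s = des π` and
`t_π = q^{maj π - C(s,2)} ∏_{i<s} (x - [i]_q) ∏_{i ≤ m-s} (q^i x + [i]_q)`.
The lowest power of `q` in `[x^t] ∏_{i=1}^n (q^i x + [i]_q)` is `q^{C(t+1,2)}`, with coefficient
`1`, and the monic factor `∏ (x - [i]_q)` only contributes terms of higher order in `q`. Hence,
for `des π ≤ k`, `[x^{k-1}] t_π ≡ q^{w(π)} (mod q^{w(π)+1})` with
`w(π) = maj π - k des π + C(k+1,2)`, while for `des π > k` it is divisible by
`q^{maj π - C(s,2)}`. Sorting the entries of such a `π` after its `k`-th descent gives a linear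
extension with exactly `k` descents and weight strictly below `maj π - C(s,2)`. So nothing
cancels at the minimal weight, where the coefficient counts the minimisers. The minimum is over a
nonempty set: a naturally labeled poset that is not a chain has incomparable consecutive labels
`a, a + 1`, and swapping them in the identity gives a linear extension with a single descent.
-/

open Finset Polynomial LaurentPolynomial

attribute [local instance] Classical.propDecidable

theorem Nat.choose_two_succ (n : ℕ) : (n + 1).choose 2 = n.choose 2 + n := by
  rw [Nat.choose_succ_succ', Nat.choose_one_right, add_comm]

theorem Nat.choose_two_add (a b : ℕ) : (a + b).choose 2 = a.choose 2 + a * b + b.choose 2 := by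
  induction b with
  | zero => simp
  | succ b ih => rw [← add_assoc, Nat.choose_two_succ, ih, Nat.choose_two_succ]; ring

theorem Nat.choose_two_mul_two (n : ℕ) : n.choose 2 * 2 = n * (n - 1) := by
  rw [Nat.choose_two_right, Nat.div_two_mul_two_of_even (Nat.even_mul_pred_self n)]

theorem Finset.card_mul_add_choose_two_le_sum (S : Finset ℕ) (a : ℕ) (h : ∀ i ∈ S, a < i) :
    #S * a + (#S + 1).choose 2 ≤ ∑ i ∈ S, i := by
  induction S using Finset.induction_on_max with
  | empty => simp
  | insert b S hlt ih =>
    have hb : b ∉ S := fun hb => lt_irrefl b (hlt b hb)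
    have hcard : #S ≤ b - a - 1 := by
      simpa using card_le_card fun x hx => mem_Ioo.2 ⟨h x (mem_insert_of_mem hx), hlt x hx⟩
    have hab : #S + a + 1 ≤ b := by have := h b (mem_insert_self b S); omega
    have := ih fun i hi => h i (mem_insert_of_mem hi)
    rw [card_insert_of_notMem hb, sum_insert hb, Nat.choose_two_succ, add_mul]
    omega

theorem Finset.exists_card_filter_le_eq (D : Finset ℕ) {k : ℕ} (hk : 1 ≤ k) (hkD : k ≤ #D) :
    ∃ c ∈ D, #(D.filter (· ≤ c)) = k := by
  induction D using Finset.induction_on_max generalizing k with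
  | empty => simp at hkD; omega
  | insert b S hlt ih =>
    have hb : b ∉ S := fun hb => lt_irrefl b (hlt b hb)
    rw [card_insert_of_notMem hb] at hkD
    rcases hkD.lt_or_eq with hlt' | rfl
    · obtain ⟨c, hc, hcard⟩ := ih hk (by omega)
      refine ⟨c, mem_insert_of_mem hc, ?_⟩
      rwa [filter_insert, if_neg (not_le.2 (hlt c hc))]
    · refine ⟨b, mem_insert_self b S, ?_⟩
      rw [filter_true_of_mem, card_insert_of_notMem hb]
      intro x hx
      rcases mem_insert.1 hx with rfl | hx
      exacts [le_rfl, (hlt x hx).le]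

namespace Polynomial

variable {R : Type*} [CommRing R]

def HasTrailingXPow (f : R[X]) (n : ℕ) : Prop := X ^ (n + 1) ∣ f - X ^ n

theorem hasTrailingXPow_X_pow (n : ℕ) : HasTrailingXPow (X ^ n : R[X]) n := by
  simp [HasTrailingXPow]

namespace HasTrailingXPow

variable {f g : R[X]} {n k : ℕ}

theorem X_pow_dvd (h : HasTrailingXPow f n) : X ^ n ∣ f := by
  simpa using dvd_add ((pow_dvd_pow X n.le_succ).trans h) (dvd_refl (X ^ n))

theorem coeff_of_le (h : HasTrailingXPow f n) {i : ℕ} (hi : i ≤ n) :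
    f.coeff i = if i = n then 1 else 0 := by
  have hzero := X_pow_dvd_iff.1 h i (Nat.lt_succ_of_le hi)
  rwa [coeff_sub, coeff_X_pow, sub_eq_zero] at hzero

theorem coeff_eq_one (h : HasTrailingXPow f n) : f.coeff n = 1 := by
  simpa using h.coeff_of_le le_rfl

theorem mul (hf : HasTrailingXPow f n) (hg : HasTrailingXPow g k) :
    HasTrailingXPow (f * g) (n + k) := by
  have key : f * g - X ^ (n + k) = (f - X ^ n) * g + X ^ n * (g - X ^ k) := by ring
  rw [HasTrailingXPow, key]
  refine dvd_add ?_ ?_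
  · rw [show n + k + 1 = n + 1 + k by omega, pow_add]
    exact mul_dvd_mul hf hg.X_pow_dvd
  · rw [add_assoc, pow_add]
    exact mul_dvd_mul_left _ hg

theorem add_of_X_pow_dvd (hf : HasTrailingXPow f n) (hg : X ^ (n + 1) ∣ g) :
    HasTrailingXPow (f + g) n := by
  rw [HasTrailingXPow, add_sub_right_comm]
  exact dvd_add hf hg

end HasTrailingXPow

theorem isLeast_coeff_toLaurent_ne_zero {p : R[X]} {n : ℕ} (h : X ^ n ∣ p)
    (hn : p.coeff n ≠ 0) : IsLeast {i : ℤ | (toLaurent p).coeff i ≠ 0} n := by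
  have hsupp : ∀ i : ℤ,
      (toLaurent p).coeff i ≠ 0 ↔ ∃ j : ℕ, p.coeff j ≠ 0 ∧ (j : ℤ) = i := by
    intro i
    rw [← Finsupp.mem_support_iff, support_coeff_toLaurent]
    simp
  refine ⟨(hsupp n).2 ⟨n, hn, rfl⟩, fun i hi => ?_⟩
  obtain ⟨j, hj, rfl⟩ := (hsupp i).1 hi
  by_contra hlt
  exact hj (X_pow_dvd_iff.1 h j (by omega))

theorem hasTrailingXPow_qIntP {n : ℕ} (hn : 1 ≤ n) : HasTrailingXPow (qIntP n) 0 := by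
  rw [HasTrailingXPow, zero_add, pow_one, pow_zero, X_dvd_iff, coeff_sub, coeff_one_zero, qIntP,
    finsetSum_coeff]
  simp [coeff_X_pow, Finset.mem_range.2 hn]

noncomputable def prodXSubQInt (s : ℕ) : ℤ[X][X] := ∏ i ∈ Icc 1 s, (X - C (qIntP i))

noncomputable def prodQPowXAddQInt (n : ℕ) : ℤ[X][X] :=
  ∏ i ∈ Icc 1 n, (C (X ^ i) * X + C (qIntP i))

theorem monic_prodXSubQInt (s : ℕ) : (prodXSubQInt s).Monic :=
  monic_prod_of_monic _ _ fun _ _ => monic_X_sub_C _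

theorem natDegree_prodXSubQInt (s : ℕ) : (prodXSubQInt s).natDegree = s := by
  rw [prodXSubQInt, natDegree_prod_of_monic _ _ fun i _ => monic_X_sub_C _]
  simp

theorem natDegree_prodQPowXAddQInt_le (n : ℕ) : (prodQPowXAddQInt n).natDegree ≤ n := by
  refine (natDegree_prod_le _ _).trans ?_
  refine (sum_le_sum fun i (_ : i ∈ Icc 1 n) =>
    natDegree_linear_le (a := X ^ i) (b := qIntP i)).trans ?_
  simp

theorem coeff_prodQPowXAddQInt_of_lt {n t : ℕ} (h : n < t) : (prodQPowXAddQInt n).coeff t = 0 :=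
  coeff_eq_zero_of_natDegree_lt ((natDegree_prodQPowXAddQInt_le n).trans_lt h)

theorem prodQPowXAddQInt_succ (n : ℕ) : prodQPowXAddQInt (n + 1) =
    prodQPowXAddQInt n * (C (X ^ (n + 1)) * X + C (qIntP (n + 1))) :=
  prod_Icc_succ_top (by omega) _

theorem coeff_prodQPowXAddQInt_succ_zero (n : ℕ) :
    (prodQPowXAddQInt (n + 1)).coeff 0 = (prodQPowXAddQInt n).coeff 0 * qIntP (n + 1) := by
  simp [prodQPowXAddQInt_succ, mul_coeff_zero]

theorem coeff_prodQPowXAddQInt_succ_succ (n t : ℕ) :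
    (prodQPowXAddQInt (n + 1)).coeff (t + 1) =
      (prodQPowXAddQInt n).coeff t * X ^ (n + 1) +
        (prodQPowXAddQInt n).coeff (t + 1) * qIntP (n + 1) := by
  rw [prodQPowXAddQInt_succ, mul_add, ← mul_assoc, coeff_add, coeff_mul_X, coeff_mul_C,
    coeff_mul_C]

theorem hasTrailingXPow_coeff_prodQPowXAddQInt {n t : ℕ} (ht : t ≤ n) :
    HasTrailingXPow ((prodQPowXAddQInt n).coeff t) ((t + 1).choose 2) := by
  induction n generalizing t with
  | zero =>
    obtain rfl : t = 0 := by omega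
    simpa [prodQPowXAddQInt] using hasTrailingXPow_X_pow (R := ℤ) 0
  | succ n ih =>
    rcases t with _ | u
    · rw [coeff_prodQPowXAddQInt_succ_zero]
      exact (ih (Nat.zero_le n)).mul (hasTrailingXPow_qIntP (by omega))
    rw [coeff_prodQPowXAddQInt_succ_succ]
    rcases (Nat.le_of_succ_le_succ ht).lt_or_eq with hu | rfl
    · rw [add_comm]
      refine ((ih hu).mul (hasTrailingXPow_qIntP (by omega))).add_of_X_pow_dvd ?_
      have hexp : (u + 1 + 1).choose 2 + 0 + 1 ≤ (u + 1).choose 2 + (n + 1) := by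
        rw [Nat.choose_two_succ (u + 1)]; omega
      calc X ^ ((u + 1 + 1).choose 2 + 0 + 1) ∣ X ^ ((u + 1).choose 2 + (n + 1)) :=
            pow_dvd_pow X hexp
        _ = X ^ (u + 1).choose 2 * X ^ (n + 1) := pow_add _ _ _
        _ ∣ _ := mul_dvd_mul (ih hu.le).X_pow_dvd dvd_rfl
    · rw [coeff_prodQPowXAddQInt_of_lt (Nat.lt_succ_self _), zero_mul, add_zero,
        Nat.choose_two_succ (u + 1)]
      exact (ih le_rfl).mul (hasTrailingXPow_X_pow _)

theorem hasTrailingXPow_coeff_mul_prodQPowXAddQInt {f : ℤ[X][X]} (hf : f.Monic) {n t : ℕ}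
    (ht : t ≤ n) : HasTrailingXPow ((f * prodQPowXAddQInt n).coeff (f.natDegree + t))
      ((t + 1).choose 2) := by
  have hmem : (f.natDegree, t) ∈ antidiagonal (f.natDegree + t) :=
    HasAntidiagonal.mem_antidiagonal.2 rfl
  rw [coeff_mul, ← add_sum_erase _ _ hmem, hf.coeff_natDegree, one_mul]
  refine (hasTrailingXPow_coeff_prodQPowXAddQInt ht).add_of_X_pow_dvd (dvd_sum fun x hx => ?_)
  obtain ⟨hne, hx⟩ := mem_erase.1 hx
  rw [HasAntidiagonal.mem_antidiagonal] at hx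
  rw [Ne, Prod.ext_iff, not_and_or] at hne
  rcases lt_or_ge f.natDegree x.1 with hd | hd
  · rw [coeff_eq_zero_of_natDegree_lt hd, zero_mul]
    exact dvd_zero _
  refine dvd_mul_of_dvd_right ?_ _
  rcases le_or_gt x.2 n with hn | hn
  · have hexp : (t + 1).choose 2 + 1 ≤ (x.2 + 1).choose 2 := by
      have := Nat.choose_le_choose 2 (show t + 1 + 1 ≤ x.2 + 1 by omega)
      rw [Nat.choose_two_succ] at this
      omega
    exact (pow_dvd_pow X hexp).trans (hasTrailingXPow_coeff_prodQPowXAddQInt hn).X_pow_dvd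
  · rw [coeff_prodQPowXAddQInt_of_lt hn]
    exact dvd_zero _

end Polynomial

noncomputable def tSummandCoeff (m s mj j : ℕ) : ℤ[X] :=
  X ^ (mj - s.choose 2) * (prodXSubQInt (s - 1) * prodQPowXAddQInt (m - s)).coeff j

theorem qInt_natCast (n : ℕ) : qInt n = toLaurent (qIntP n) := by
  simp [qInt, qIntP, Polynomial.toLaurent_X_pow]

theorem coeff_tSummand {m s mj : ℕ} (h : s.choose 2 ≤ mj) (j : ℕ) :
    (tSummand m s mj).coeff j = toLaurent (tSummandCoeff m s mj j) := by
  have hA : ∏ i ∈ Icc 1 (s - 1), (X - Polynomial.C (qInt (i : ℤ))) =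
      (prodXSubQInt (s - 1)).map toLaurent := by
    simp [prodXSubQInt, Polynomial.map_prod, qInt_natCast]
  have hB : ∏ i ∈ Icc 1 (m - s),
      (Polynomial.C (T (i : ℤ)) * X + Polynomial.C (qInt (i : ℤ))) =
        (prodQPowXAddQInt (m - s)).map toLaurent := by
    simp only [prodQPowXAddQInt, Polynomial.map_prod, Polynomial.map_add, Polynomial.map_mul,
      Polynomial.map_C, Polynomial.map_X, Polynomial.toLaurent_X_pow, qInt_natCast]
  have hT : T ((mj : ℤ) - (s * (s - 1) / 2 : ℕ)) =
      toLaurent (X ^ (mj - s.choose 2) : ℤ[X]) := by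
    rw [Polynomial.toLaurent_X_pow, ← Nat.choose_two_right, Nat.cast_sub h]
  rw [tSummand, hA, hB, mul_assoc, ← Polynomial.map_mul, hT, Polynomial.coeff_C_mul,
    Polynomial.coeff_map, tSummandCoeff, map_mul]

theorem hasTrailingXPow_tSummandCoeff {m s k : ℕ} (hs : 1 ≤ s) (hsk : s ≤ k) (hkm : k ≤ m)
    (mj : ℕ) : (tSummandCoeff m s mj (k - 1)).HasTrailingXPow
      (mj - s.choose 2 + (k - s + 1).choose 2) := by
  have hdeg : (prodXSubQInt (s - 1)).natDegree + (k - s) = k - 1 := by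
    rw [natDegree_prodXSubQInt]; omega
  have := hasTrailingXPow_coeff_mul_prodQPowXAddQInt (monic_prodXSubQInt (s - 1))
    (show k - s ≤ m - s by omega)
  rw [hdeg] at this
  exact (Polynomial.hasTrailingXPow_X_pow _).mul this

section SortFrom

variable {m : ℕ}

noncomputable def suffixOrderIso (π : Equiv.Perm (Fin m)) (c : ℕ) :
    {i : Fin m // c ≤ (i : ℕ)} ≃o {x : Fin m // c ≤ (π.symm x : ℕ)} :=
  (Fintype.orderIsoFinOfCardEq _ rfl).symm.trans
    (Fintype.orderIsoFinOfCardEq _ (Fintype.card_congr (π.subtypeEquiv fun i => by simp)).symm)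

/-- `π` with the entries in the (0-based) positions `≥ c` rearranged increasingly. -/
noncomputable def sortFrom (π : Equiv.Perm (Fin m)) (c : ℕ) : Equiv.Perm (Fin m) :=
  Equiv.subtypeCongr (suffixOrderIso π c).toEquiv (π.subtypeEquiv fun i => by simp)

variable (π : Equiv.Perm (Fin m)) (c : ℕ)

theorem sortFrom_apply_of_lt {j : Fin m} (h : (j : ℕ) < c) : sortFrom π c j = π j := by
  simp [sortFrom, Equiv.subtypeCongr, not_le.2 h]

theorem sortFrom_apply_of_le {j : Fin m} (h : c ≤ (j : ℕ)) :
    sortFrom π c j = suffixOrderIso π c ⟨j, h⟩ := by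
  simp [sortFrom, Equiv.subtypeCongr, h]

theorem le_symm_sortFrom {j : Fin m} (h : c ≤ (j : ℕ)) :
    c ≤ (π.symm (sortFrom π c j) : ℕ) := by
  rw [sortFrom_apply_of_le π c h]
  exact (suffixOrderIso π c ⟨j, h⟩).2

theorem sortFrom_lt_sortFrom {i j : Fin m} (hi : c ≤ (i : ℕ)) (hij : i < j) :
    sortFrom π c i < sortFrom π c j := by
  rw [sortFrom_apply_of_le π c hi, sortFrom_apply_of_le π c (hi.trans hij.le)]
  exact (suffixOrderIso π c).strictMono (Subtype.mk_lt_mk.2 hij)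

theorem sortFrom_le_apply (hcm : c < m) {i : Fin m} (hi : c ≤ (i : ℕ)) :
    sortFrom π c ⟨c, hcm⟩ ≤ π i := by
  obtain ⟨⟨j, hj⟩, hji⟩ := (suffixOrderIso π c).surjective ⟨π i, by simpa using hi⟩
  have hval : (suffixOrderIso π c ⟨j, hj⟩ : Fin m) = π i := congrArg Subtype.val hji
  rw [sortFrom_apply_of_le π c le_rfl, ← hval]
  exact (suffixOrderIso π c).monotone (Subtype.mk_le_mk.2 hj)

end SortFrom

section Descents

variable {m : ℕ}

theorem mem_DesSet_iff (π : Equiv.Perm (Fin m)) {i : ℕ} (h1 : 1 ≤ i) (h2 : i < m) :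
    i ∈ DesSet m π ↔ π ⟨i, h2⟩ < π ⟨i - 1, by omega⟩ := by
  have hw1 : wordAt m π (i + 1) = (π ⟨i, h2⟩ : ℕ) + 1 := by
    simp [wordAt, h2]
  have hw2 : wordAt m π i = (π ⟨i - 1, by omega⟩ : ℕ) + 1 := by
    simp [wordAt, show i - 1 < m by omega]
  simp only [DesSet, mem_filter, mem_Ico, hw1, hw2, Fin.lt_def]
  omega

theorem DesSet_subset (π : Equiv.Perm (Fin m)) : DesSet m π ⊆ Ico 1 m := filter_subset _ _

theorem choose_two_le_majIdx (π : Equiv.Perm (Fin m)) :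
    (desNum m π + 1).choose 2 ≤ majIdx m π := by
  simpa [desNum, majIdx] using (DesSet m π).card_mul_add_choose_two_le_sum 0
    fun i hi => (mem_Ico.1 (DesSet_subset π hi)).1

theorem choose_two_desNum_le_majIdx (π : Equiv.Perm (Fin m)) :
    (desNum m π).choose 2 ≤ majIdx m π :=
  (Nat.choose_le_choose 2 (desNum m π).le_succ).trans (choose_two_le_majIdx π)

theorem isLinExt_sortFrom {P : PartialOrder (Fin m)} (hnat : NatLabeled m P)
    {π : Equiv.Perm (Fin m)} (hπ : IsLinExt m P π) (c : ℕ) : IsLinExt m P (sortFrom π c) := by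
  intro i j hij
  by_contra hji
  rw [not_le] at hji
  by_cases hjc : (j : ℕ) < c
  · by_cases hic : (i : ℕ) < c
    · rw [sortFrom_apply_of_lt π c hic, sortFrom_apply_of_lt π c hjc] at hij
      exact absurd (hπ i j hij) (not_le.2 hji)
    · rw [sortFrom_apply_of_lt π c hjc, ← π.apply_symm_apply (sortFrom π c i)] at hij
      have := le_symm_sortFrom π c (not_lt.1 hic)
      have := Fin.le_def.1 (hπ _ j hij)
      clear hij
      omega
  · exact absurd (hnat _ _ hij) (not_le.2 (sortFrom_lt_sortFrom π c (not_lt.1 hjc) hji))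

theorem DesSet_sortFrom {π : Equiv.Perm (Fin m)} {c : ℕ} (hc : c ∈ DesSet m π) :
    DesSet m (sortFrom π c) = (DesSet m π).filter (· ≤ c) := by
  obtain ⟨hc1, hcm⟩ := mem_Ico.1 (DesSet_subset π hc)
  ext i
  rw [mem_filter]
  by_cases hi : 1 ≤ i ∧ i < m
  swap
  · exact iff_of_false (fun h => hi (mem_Ico.1 (DesSet_subset _ h)))
      fun h => hi (mem_Ico.1 (DesSet_subset _ h.1))
  obtain ⟨hi1, him⟩ := hi
  rw [mem_DesSet_iff _ hi1 him, mem_DesSet_iff _ hi1 him]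
  rcases lt_trichotomy i c with hic | rfl | hic
  · rw [sortFrom_apply_of_lt π c hic, sortFrom_apply_of_lt π c (by simp; omega)]
    simp [hic.le]
  · rw [mem_DesSet_iff _ hi1 him] at hc
    rw [sortFrom_apply_of_lt π i (j := ⟨i - 1, by omega⟩) (by simp; omega)]
    simpa [hc] using (sortFrom_le_apply π i him le_rfl).trans_lt hc
  · have := sortFrom_lt_sortFrom π c (i := ⟨i - 1, by omega⟩) (j := ⟨i, him⟩)
      (by simp; omega) (by simp [Fin.lt_def]; omega)
    simp [this.not_gt, hic.not_ge]

end Descents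

section OneDescent

variable {m : ℕ}

theorem exists_not_le_succ_of_not_total {P : PartialOrder (Fin m)}
    (hnc : ¬ ∀ x y : Fin m, P.le x y ∨ P.le y x) :
    ∃ (a : ℕ) (h : a + 1 < m), ¬ P.le ⟨a, by omega⟩ ⟨a + 1, h⟩ := by
  by_contra! hstep
  refine hnc fun x y => ?_
  have : Std.Refl P.le := ⟨P.le_refl⟩
  have : IsTrans (Fin m) P.le := ⟨P.le_trans⟩
  let f : ℕ → Fin m := fun n => ⟨min n (m - 1), by have := x.2; omega⟩
  have hf : ∀ n, 0 ≤ n → P.le (f n) (f (n + 1)) := by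
    intro n _
    by_cases hn : n + 1 < m
    · have h0 : f n = ⟨n, by omega⟩ := Fin.ext (by simp [f]; omega)
      have h1 : f (n + 1) = ⟨n + 1, hn⟩ := Fin.ext (by simp [f]; omega)
      rw [h0, h1]
      exact hstep n hn
    · have h : f (n + 1) = f n := Fin.ext (by simp [f]; omega)
      rw [h]
  have hfx : ∀ z : Fin m, f z = z := fun z => by ext; simp [f]; omega
  rcases le_total x y with h | h
  · left; simpa [hfx] using Nat.rel_of_forall_rel_succ_of_le_of_le P.le hf (Nat.zero_le x) h
  · right; simpa [hfx] using Nat.rel_of_forall_rel_succ_of_le_of_le P.le hf (Nat.zero_le y) h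

theorem exists_isLinExt_desNum_eq_one {P : PartialOrder (Fin m)} (hnat : NatLabeled m P)
    (hnc : ¬ ∀ x y : Fin m, P.le x y ∨ P.le y x) :
    ∃ π : Equiv.Perm (Fin m), IsLinExt m P π ∧ desNum m π = 1 := by
  obtain ⟨a, ham, hab⟩ := exists_not_le_succ_of_not_total hnc
  set A : Fin m := ⟨a, by omega⟩
  set B : Fin m := ⟨a + 1, ham⟩
  have hval : ∀ x : Fin m, (Equiv.swap A B x : ℕ) =
      if (x : ℕ) = a then a + 1 else if (x : ℕ) = a + 1 then a else x := by
    intro x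
    rw [Equiv.swap_apply_def]
    split_ifs <;> simp_all [A, B, Fin.ext_iff]
  refine ⟨Equiv.swap A B, fun i j hij => ?_, ?_⟩
  · by_contra hji
    have hle := Fin.le_def.1 (hnat _ _ hij)
    have hi := hval i
    have hj := hval j
    rw [not_le, Fin.lt_def] at hji
    obtain ⟨rfl, rfl⟩ : i = B ∧ j = A := by
      clear hij hab hnc
      constructor <;> ext <;> split_ifs at hi hj <;> simp [A, B] <;> omega
    simp [A, B] at hij
    exact hab hij
  · suffices DesSet m (Equiv.swap A B) = {a + 1} by simp [desNum, this]
    ext i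
    rw [mem_singleton]
    clear hab hnc
    by_cases hi : 1 ≤ i ∧ i < m
    · rw [mem_DesSet_iff _ hi.1 hi.2, Fin.lt_def, hval, hval]
      split_ifs <;> simp_all <;> omega
    · exact iff_of_false (fun h => hi (mem_Ico.1 (DesSet_subset _ h))) (by omega)

end OneDescent

theorem exists_isLinExt_desNum_eq_of_lt {m : ℕ} {P : PartialOrder (Fin m)}
    (hnat : NatLabeled m P) {π : Equiv.Perm (Fin m)} (hπ : IsLinExt m P π) {k : ℕ}
    (hk : 1 ≤ k) (hks : k < desNum m π) :
    ∃ π', IsLinExt m P π' ∧ desNum m π' = k ∧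
      majIdx m π' - k.choose 2 < majIdx m π - (desNum m π).choose 2 := by
  set D := DesSet m π
  obtain ⟨c, hc, hcard⟩ := D.exists_card_filter_le_eq hk hks.le
  have hdes : desNum m (sortFrom π c) = k := by rw [desNum, DesSet_sortFrom hc, hcard]
  refine ⟨sortFrom π c, isLinExt_sortFrom hnat hπ c, hdes, ?_⟩
  have hmaj : majIdx m (sortFrom π c) = ∑ i ∈ D.filter (· ≤ c), i := by
    rw [majIdx, DesSet_sortFrom hc]
  have hmajπ :
      majIdx m π = ∑ i ∈ D.filter (· ≤ c), i + ∑ i ∈ D.filter (¬ · ≤ c), i :=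
    (sum_filter_add_sum_filter_not D (· ≤ c) (fun i => i)).symm
  have hcards : #(D.filter (· ≤ c)) + #(D.filter (¬ · ≤ c)) = #D :=
    card_filter_add_card_filter_not _
  have htail : #(D.filter (¬ · ≤ c)) * c + (#(D.filter (¬ · ≤ c)) + 1).choose 2 ≤
      ∑ i ∈ D.filter (¬ · ≤ c), i :=
    card_mul_add_choose_two_le_sum _ c fun i hi => not_le.1 (mem_filter.1 hi).2
  set n := #(D.filter (¬ · ≤ c))
  have hkc : k ≤ c := by
    have := card_le_card fun i (hi : i ∈ D.filter (· ≤ c)) => mem_Icc.2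
      ⟨(mem_Ico.1 (DesSet_subset π (mem_filter.1 hi).1)).1, (mem_filter.1 hi).2⟩
    simpa [hcard] using this
  have hs : desNum m π = k + n := by rw [desNum, ← hcards, hcard]
  have hhead := choose_two_le_majIdx (sortFrom π c)
  rw [hdes, Nat.choose_two_succ, hmaj] at hhead
  rw [Nat.choose_two_succ] at htail
  rw [hmaj, hmajπ, hs, Nat.choose_two_add, mul_comm k n]
  have := Nat.mul_le_mul_left n hkc
  omega

/-- The exponent of the lowest power of `q` in `t(π, k)` when `des π ≤ k`. -/
def weight (m k : ℕ) (π : Equiv.Perm (Fin m)) : ℕ :=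
  majIdx m π - (desNum m π).choose 2 + (k - desNum m π + 1).choose 2

theorem natCast_weight {m k : ℕ} {π : Equiv.Perm (Fin m)} (hk : desNum m π ≤ k) :
    (weight m k π : ℤ) = majIdx m π - k * desNum m π + k * (k + 1) / 2 := by
  unfold weight
  set s := desNum m π
  have hmaj : s.choose 2 ≤ majIdx m π := choose_two_desNum_le_majIdx π
  have hk2 : (k * (k + 1) : ℤ) / 2 = ((k + 1).choose 2 : ℕ) := by
    have h := Nat.choose_two_mul_two (k + 1)
    rw [Nat.add_sub_cancel] at h
    rw [Int.ediv_eq_of_eq_mul_left two_ne_zero]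
    exact_mod_cast (h.trans (mul_comm _ _)).symm
  have hadd : (k + 1).choose 2 = (k - s + 1).choose 2 + (k - s + 1) * s + s.choose 2 := by
    rw [← Nat.choose_two_add]; congr 1; omega
  have hsucc := Nat.choose_two_mul_two (s + 1)
  rw [Nat.choose_two_succ, Nat.add_sub_cancel] at hsucc
  rw [hk2, hadd]
  push_cast [hmaj, Nat.cast_sub hk]
  linear_combination -(by exact_mod_cast hsucc : ((s.choose 2 + s) * 2 : ℤ) = (s + 1) * s)

noncomputable def intCoeffBpoly (m : ℕ) (P : PartialOrder (Fin m)) (k : ℕ) : ℤ[X] :=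
  ∑ π ∈ univ.filter (fun π => IsLinExt m P π ∧ 1 ≤ desNum m π),
    tSummandCoeff m (desNum m π) (majIdx m π) (k - 1)

theorem coeff_Bpoly {m k : ℕ} (P : PartialOrder (Fin m)) (hk : 1 ≤ k) :
    (Bpoly m P).coeff k = toLaurent (intCoeffBpoly m P k) := by
  obtain ⟨j, rfl⟩ := Nat.exists_eq_add_of_le' hk
  rw [Bpoly, Polynomial.coeff_X_mul, Polynomial.finsetSum_coeff, intCoeffBpoly, map_sum,
    Nat.add_sub_cancel]
  exact sum_congr rfl fun π _ => coeff_tSummand (choose_two_desNum_le_majIdx π) j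

theorem X_pow_dvd_and_coeff_nonneg_tSummandCoeff {m k W : ℕ} {P : PartialOrder (Fin m)}
    (hnat : NatLabeled m P) (hk1 : 1 ≤ k) (hkm : k ≤ m)
    (hmin : ∀ π, IsLinExt m P π ∧ 1 ≤ desNum m π ∧ desNum m π ≤ k →
      W ≤ weight m k π)
    {π : Equiv.Perm (Fin m)} (hπ : IsLinExt m P π) (hs : 1 ≤ desNum m π) :
    X ^ W ∣ tSummandCoeff m (desNum m π) (majIdx m π) (k - 1) ∧
      0 ≤ (tSummandCoeff m (desNum m π) (majIdx m π) (k - 1)).coeff W := by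
  rcases le_or_gt (desNum m π) k with hsk | hks
  · have hlow := hasTrailingXPow_tSummandCoeff hs hsk hkm (majIdx m π)
    have hW : W ≤ weight m k π := hmin π ⟨hπ, hs, hsk⟩
    refine ⟨(pow_dvd_pow X hW).trans hlow.X_pow_dvd, ?_⟩
    rw [hlow.coeff_of_le hW]
    split_ifs <;> norm_num
  · obtain ⟨π', hπ', hdes', hlt⟩ := exists_isLinExt_desNum_eq_of_lt hnat hπ hk1 hks
    have hW : W + 1 ≤ majIdx m π - (desNum m π).choose 2 := by
      have := hmin π' ⟨hπ', hdes' ▸ hk1, hdes'.le⟩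
      rw [weight, hdes', Nat.sub_self, zero_add, Nat.choose_eq_zero_of_lt one_lt_two,
        add_zero] at this
      omega
    have hdvd : X ^ (W + 1) ∣ tSummandCoeff m (desNum m π) (majIdx m π) (k - 1) :=
      (pow_dvd_pow X hW).trans (dvd_mul_right _ _)
    exact ⟨(pow_dvd_pow X W.le_succ).trans hdvd,
      (Polynomial.X_pow_dvd_iff.1 hdvd W W.lt_succ_self).ge⟩

theorem X_pow_weight_dvd_and_coeff_pos {m k : ℕ} {P : PartialOrder (Fin m)}
    (hnat : NatLabeled m P) (hk1 : 1 ≤ k) (hkm : k ≤ m) {π₀ : Equiv.Perm (Fin m)}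
    (hπ₀ : IsLinExt m P π₀ ∧ 1 ≤ desNum m π₀ ∧ desNum m π₀ ≤ k)
    (hmin : ∀ π, IsLinExt m P π ∧ 1 ≤ desNum m π ∧ desNum m π ≤ k →
      weight m k π₀ ≤ weight m k π) :
    X ^ weight m k π₀ ∣ intCoeffBpoly m P k ∧
      0 < (intCoeffBpoly m P k).coeff (weight m k π₀) := by
  set W := weight m k π₀
  have hterm := fun π (hπ : π ∈ univ.filter fun π => IsLinExt m P π ∧ 1 ≤ desNum m π) =>
    X_pow_dvd_and_coeff_nonneg_tSummandCoeff hnat hk1 hkm hmin (mem_filter.1 hπ).2.1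
      (mem_filter.1 hπ).2.2
  have hcoeff₀ : (tSummandCoeff m (desNum m π₀) (majIdx m π₀) (k - 1)).coeff W = 1 :=
    (hasTrailingXPow_tSummandCoeff hπ₀.2.1 hπ₀.2.2 hkm _).coeff_eq_one
  refine ⟨dvd_sum fun π hπ => (hterm π hπ).1, ?_⟩
  rw [intCoeffBpoly, Polynomial.finsetSum_coeff]
  exact sum_pos' (fun π hπ => (hterm π hπ).2)
    ⟨π₀, by simp [hπ₀], hcoeff₀ ▸ one_pos⟩

theorem statement16_general (m : ℕ) (P : PartialOrder (Fin m))
    (hnat : NatLabeled m P)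
    (hnc : ¬ ∀ x y : Fin m, P.le x y ∨ P.le y x)
    (k : ℕ) (hk1 : 1 ≤ k) (hk2 : k ≤ m) :
    (Bpoly m P).coeff k ≠ 0 ∧
    ∃ v : ℤ,
      IsLeast
        {v : ℤ | ∃ π : Equiv.Perm (Fin m), IsLinExt m P π ∧
          1 ≤ desNum m π ∧ desNum m π ≤ k ∧
          v = (majIdx m π : ℤ) - k * desNum m π + k * (k + 1) / 2} v ∧
      IsLeast {i : ℤ | AddMonoidAlgebra.coeff ((Bpoly m P).coeff k) i ≠ 0} v := by
  obtain ⟨π₁, hπ₁, hdes₁⟩ := exists_isLinExt_desNum_eq_one hnat hnc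
  obtain ⟨π₀, hπ₀, hmin⟩ := Set.exists_min_image
    {π | IsLinExt m P π ∧ 1 ≤ desNum m π ∧ desNum m π ≤ k} (weight m k) (Set.toFinite _)
    ⟨π₁, hπ₁, hdes₁.ge, hdes₁ ▸ hk1⟩
  obtain ⟨hdvd, hpos⟩ := X_pow_weight_dvd_and_coeff_pos hnat hk1 hk2 hπ₀ hmin
  have hleast := Polynomial.isLeast_coeff_toLaurent_ne_zero hdvd hpos.ne'
  rw [← coeff_Bpoly P hk1] at hleast
  refine ⟨fun h => by simpa [h] using hleast.1, weight m k π₀,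
    ⟨⟨π₀, hπ₀.1, hπ₀.2.1, hπ₀.2.2, natCast_weight hπ₀.2.2⟩, ?_⟩, hleast⟩
  rintro _ ⟨π, hπ, hs1, hsk, rfl⟩
  rw [← natCast_weight hsk]
  exact_mod_cast hmin π ⟨hπ, hs1, hsk⟩

theorem statement16 (m : ℕ) (hm : 1 ≤ m) (P : PartialOrder (Fin m))
    (hnat : NatLabeled m P)
    (hnc : ¬ ∀ x y : Fin m, P.le x y ∨ P.le y x)
    (k : ℕ) (hk1 : 1 ≤ k) (hk2 : k ≤ m) :
    (Bpoly m P).coeff k ≠ 0 ∧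
    ∃ v : ℤ,
      IsLeast
        {v : ℤ | ∃ π : Equiv.Perm (Fin m), IsLinExt m P π ∧
          1 ≤ desNum m π ∧ desNum m π ≤ k ∧
          v = (majIdx m π : ℤ) - k * desNum m π + k * (k + 1) / 2} v ∧
      IsLeast {i : ℤ | AddMonoidAlgebra.coeff ((Bpoly m P).coeff k) i ≠ 0} v :=
  statement16_general m P hnat hnc k hk1 hk2
end
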